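/- For n rounds with payoff vectors in [0,h]^k, the Exponential Weights algorithm with learning rate ε = √((ln k)/n) has expected per-round regret at most 2h·√((ln k)/n); in particular its per-round regret vanishes as n → ∞. -/

import Mathlib

/-!
Track the potential `Φ_m = ∑_a (1+ε)^(U^m_a/h)`. By Bernoulli's inequality one round multiplies
`Φ` by at most `1 + (ε/h)·α^m·u^m`, so `log Φ_n ≤ log k + (ε/h)·E[EW]`; on the other hand `Φ_n`
exceeds the weight of the best action, so `log Φ_n ≥ (OPT/h)·log(1+ε) ≥ (OPT/h)(ε - ε²)`.
Together, `OPT - E[EW] ≤ h·log k/ε + ε·n·h`, and the choice `ε² = log k/n` balances both terms.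
-/

open Finset Real

namespace ExponentialWeights

variable {ι : Type*}

lemma sub_sq_le_log_one_add {x : ℝ} (hx : 0 ≤ x) : x - x ^ 2 ≤ log (1 + x) := by
  refine le_trans ?_ (le_log_one_add_of_nonneg hx)
  rw [le_div_iff₀ (by linarith)]
  nlinarith [sq_nonneg x, mul_nonneg hx (sq_nonneg x)]

section Potential

variable {ε h : ℝ} (S : ι → ℝ)

variable (ε h) in
noncomputable def weight (a : ι) : ℝ := (1 + ε) ^ (S a / h)

lemma weight_pos (hε : 0 ≤ ε) (a : ι) : 0 < weight ε h S a :=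
  rpow_pos_of_pos (by linarith) _

variable [Fintype ι]

variable (ε h) in
noncomputable def potential : ℝ := ∑ a, weight ε h S a

variable (ε h) in
noncomputable def expectedPayoff (v : ι → ℝ) : ℝ := ∑ a, weight ε h S a / potential ε h S * v a

lemma potential_pos [Nonempty ι] (hε : 0 ≤ ε) : 0 < potential ε h S :=
  sum_pos (fun a _ => weight_pos S hε a) univ_nonempty

lemma expectedPayoff_of_subsingleton [Subsingleton ι] (hε : 0 ≤ ε) (v : ι → ℝ) (a : ι) :
    expectedPayoff ε h S v = v a := by
  have : Unique ι := uniqueOfSubsingleton a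
  simp [expectedPayoff, potential, (weight_pos S hε a).ne', Subsingleton.elim default a]

lemma mul_log_le_log_potential (hε : 0 ≤ ε) (a : ι) :
    S a / h * log (1 + ε) ≤ log (potential ε h S) := by
  rw [← log_rpow (by linarith)]
  exact log_le_log (weight_pos S hε a)
    (single_le_sum (fun b _ => (weight_pos S hε b).le) (mem_univ a))

lemma potential_add_le [Nonempty ι] (hε : 0 ≤ ε) (hh : 0 < h) {v : ι → ℝ}
    (hv : ∀ a, v a ∈ Set.Icc 0 h) :
    potential ε h (S + v) ≤ potential ε h S * (1 + ε / h * expectedPayoff ε h S v) := by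
  have hweight : ∀ a, weight ε h (S + v) a ≤ weight ε h S a + ε / h * (weight ε h S a * v a) := by
    intro a
    have bernoulli := rpow_one_add_le_one_add_mul_self (by linarith : -1 ≤ ε)
      (div_nonneg (hv a).1 hh.le) ((div_le_one hh).2 (hv a).2)
    calc weight ε h (S + v) a = weight ε h S a * (1 + ε) ^ (v a / h) := by
          rw [weight, weight, Pi.add_apply, add_div, rpow_add (by linarith)]
      _ ≤ weight ε h S a * (1 + v a / h * ε) :=
          mul_le_mul_of_nonneg_left bernoulli (weight_pos S hε a).le
      _ = weight ε h S a + ε / h * (weight ε h S a * v a) := by ring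
  have hexpected : ∑ a, weight ε h S a * v a = potential ε h S * expectedPayoff ε h S v := by
    rw [expectedPayoff, mul_sum]
    exact sum_congr rfl fun a _ => by field_simp [(potential_pos S hε (h := h)).ne']
  calc potential ε h (S + v) ≤ ∑ a, (weight ε h S a + ε / h * (weight ε h S a * v a)) :=
        sum_le_sum fun a _ => hweight a
    _ = potential ε h S * (1 + ε / h * expectedPayoff ε h S v) := by
        rw [sum_add_distrib, ← mul_sum, hexpected, potential]; ring

lemma log_potential_add_le [Nonempty ι] (hε : 0 ≤ ε) (hh : 0 < h) {v : ι → ℝ}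
    (hv : ∀ a, v a ∈ Set.Icc 0 h) :
    log (potential ε h (S + v)) ≤ log (potential ε h S) + ε / h * expectedPayoff ε h S v := by
  have hΦ := potential_pos S hε (h := h)
  have hgain : 0 ≤ ε / h * expectedPayoff ε h S v :=
    mul_nonneg (div_nonneg hε hh.le) (sum_nonneg fun a _ =>
      mul_nonneg (div_nonneg (weight_pos S hε a).le hΦ.le) (hv a).1)
  calc log (potential ε h (S + v))
      ≤ log (potential ε h S * (1 + ε / h * expectedPayoff ε h S v)) :=
        log_le_log (potential_pos _ hε) (potential_add_le S hε hh hv)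
    _ = log (potential ε h S) + log (1 + ε / h * expectedPayoff ε h S v) :=
        log_mul hΦ.ne' (by linarith)
    _ ≤ log (potential ε h S) + ε / h * expectedPayoff ε h S v := by
        linarith [log_le_sub_one_of_pos (by linarith : 0 < 1 + ε / h * expectedPayoff ε h S v)]

end Potential

section Rounds

variable {n : ℕ} (u : Fin n → ι → ℝ)

/-- Payoff accumulated in rounds `i < m`; rounds are 0-indexed, so round `i` plays against
`cumPayoff u i`. -/
def cumPayoff (m : ℕ) (a : ι) : ℝ :=
  ∑ i ∈ univ.filter (fun i : Fin n => i.val < m), u i a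

lemma cumPayoff_zero : cumPayoff u 0 = 0 := by
  ext a; simp [cumPayoff]

lemma cumPayoff_succ (i : Fin n) : cumPayoff u (i + 1) = cumPayoff u i + u i := by
  ext a
  have hfilter : univ.filter (fun j : Fin n => j.val < i + 1)
      = insert i (univ.filter fun j : Fin n => j.val < i) := by
    ext j
    simp only [mem_filter, mem_univ, true_and, mem_insert, Fin.ext_iff]
    omega
  rw [cumPayoff, hfilter, sum_insert (by simp), add_comm]
  rfl

lemma cumPayoff_self (a : ι) : cumPayoff u n a = ∑ i, u i a := by
  simp [cumPayoff]

variable [Fintype ι]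

variable {ε h : ℝ}

lemma log_potential_cumPayoff_le [Nonempty ι] (hε : 0 ≤ ε) (hh : 0 < h)
    (hu : ∀ i a, u i a ∈ Set.Icc 0 h) :
    log (potential ε h (cumPayoff u n)) ≤
      log (Fintype.card ι) + ε / h * ∑ i : Fin n, expectedPayoff ε h (cumPayoff u i) (u i) := by
  set L : ℕ → ℝ := fun m => log (potential ε h (cumPayoff u m))
  have hstep : ∀ i : Fin n, L (i + 1) - L i ≤ ε / h * expectedPayoff ε h (cumPayoff u i) (u i) :=
    fun i => by
      simp only [L, cumPayoff_succ]
      linarith [log_potential_add_le (cumPayoff u i) hε hh (hu i)]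
  have htelescope : ∑ i : Fin n, (L (i + 1) - L i) = L n - L 0 := by
    rw [Fin.sum_univ_eq_sum_range (fun m => L (m + 1) - L m), sum_range_sub]
  have hL0 : L 0 = log (Fintype.card ι) := by
    simp [L, cumPayoff_zero, potential, weight]
  rw [mul_sum]
  linarith [sum_le_sum fun i (_ : i ∈ univ) => hstep i]

theorem sum_sub_sum_expectedPayoff_le (hε : 0 < ε) (hh : 0 < h)
    (hu : ∀ i a, u i a ∈ Set.Icc 0 h) (a : ι) :
    ∑ i, u i a - ∑ i : Fin n, expectedPayoff ε h (cumPayoff u i) (u i) ≤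
      h * log (Fintype.card ι) / ε + ε * n * h := by
  have : Nonempty ι := ⟨a⟩
  set U := ∑ i, u i a
  set E := ∑ i : Fin n, expectedPayoff ε h (cumPayoff u i) (u i)
  have hU : U ≤ n * h := by
    simpa using sum_le_sum fun i (_ : i ∈ univ) => (hu i a).2
  have hlower : U / h * (ε - ε ^ 2) ≤ log (potential ε h (cumPayoff u n)) := by
    have hbest := mul_log_le_log_potential (cumPayoff u n) hε.le a (h := h)
    rw [cumPayoff_self] at hbest
    exact (mul_le_mul_of_nonneg_left (sub_sq_le_log_one_add hε.le)
      (div_nonneg (sum_nonneg fun i _ => (hu i a).1) hh.le)).trans hbest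
  have hupper := log_potential_cumPayoff_le u hε.le hh hu
  have hcombined : U * (ε - ε ^ 2) ≤ h * log (Fintype.card ι) + ε * E := by
    have := mul_le_mul_of_nonneg_right (hlower.trans hupper) hh.le
    field_simp at this
    linarith
  rw [div_add' _ _ _ hε.ne', le_div_iff₀ hε]
  nlinarith [mul_le_mul_of_nonneg_left hU (sq_nonneg ε)]

end Rounds

end ExponentialWeights

open ExponentialWeights in
/-- Exponential Weights with learning rate `ε = √((ln k)/n)` has expected
per-round regret at most `2h·√((ln k)/n)` on every payoff sequence in `[0,h]^k`. -/
theorem exponential_weights_vanishing_regret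
    (k n : ℕ) (hk : 0 < k) (hn : 0 < n) (h : ℝ) (hh : 0 < h)
    (ε : ℝ) (hεdef : ε = Real.sqrt (Real.log k / n))
    (u : Fin n → Fin k → ℝ) (hu : ∀ i a, u i a ∈ Set.Icc (0 : ℝ) h) :
    ((Finset.univ.sup' (Finset.univ_nonempty_iff.mpr ⟨⟨0, hk⟩⟩)
          fun a : Fin k => ∑ i : Fin n, u i a)
        - ∑ i : Fin n, ∑ a : Fin k,
            ((1 + ε) ^ ((∑ i' ∈ Finset.univ.filter (fun i' : Fin n => i'.val < i.val), u i' a) / h)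
                / ∑ j : Fin k,
                    (1 + ε) ^ ((∑ i' ∈ Finset.univ.filter (fun i' : Fin n => i'.val < i.val), u i' j) / h))
              * u i a) / n
      ≤ 2 * h * Real.sqrt (Real.log k / n) := by
  have hε : 0 ≤ ε := hεdef ▸ sqrt_nonneg _
  have hn' : (0 : ℝ) < n := by exact_mod_cast hn
  change (univ.sup' _ (fun a => ∑ i, u i a)
    - ∑ i : Fin n, expectedPayoff ε h (cumPayoff u i) (u i)) / n ≤ _
  rw [← hεdef, div_le_iff₀ hn', sub_le_iff_le_add]
  refine sup'_le _ _ fun a _ => ?_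
  rcases (Nat.one_le_iff_ne_zero.2 hk.ne').eq_or_lt with rfl | hk1
  · simp only [expectedPayoff_of_subsingleton _ hε _ a, le_add_iff_nonneg_left]
    positivity
  · have hεpos : 0 < ε := hεdef ▸ sqrt_pos.2 (div_pos (log_pos (by exact_mod_cast hk1)) hn')
    have hlog : log k = ε ^ 2 * n := by
      rw [hεdef, sq_sqrt (div_nonneg (log_nonneg (by exact_mod_cast hk)) hn'.le)]
      field_simp
    have hregret := sum_sub_sum_expectedPayoff_le u hεpos hh hu a
    rw [Fintype.card_fin, hlog] at hregret
    have hbalance : h * (ε ^ 2 * n) / ε = ε * n * h := by field_simp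
    linarith
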